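/- Let h_1, ..., h_M, g_1, ..., g_M be independent strictly positive continuous random variables whose distributions do not depend on ρ, and define the beam-selection outage probability P^o(ρ) as in the NOMA scheme (with power allocation coefficients given by (6) and target rates R^P, R^S fixed). Then P^o(ρ) → 0 as ρ → ∞, i.e., there is no outage error floor. -/

import Mathlib

open MeasureTheory Filter Topology

/-!
Fix an outcome with all channel gains positive (almost every outcome) and any beam `m`.
As `ρ → ∞` each primary coefficient `min 1 (ε_P / (ρ g_i))` tends to `0`, so the interference
seen by beam `m` vanishes; hence `α^S_{m,II} → 1 / (ε_P + 1) > 0`, while the secondary SINR,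
whose denominator is `interference + 1/ρ → 0⁺`, tends to `∞`. So almost every outcome is
eventually outside the outage event, and dominated convergence gives `μ (outage) → 0`.
-/

noncomputable section

namespace BeamNOMA

variable {M : ℕ}

/- `primaryCoeff` is `α^P_{i,I}`, `secondaryCoeff` is `α^S_{m,II}` of (6) and `secondarySINR` is
the SINR for decoding the secondary signal on beam `m`; `h`, `g` are the gain vectors of one
channel realisation. -/

def primaryCoeff (ε ρ g : ℝ) : ℝ := min 1 (ε / (ρ * g))

def interference (ε ρ : ℝ) (h g : Fin M → ℝ) (m : Fin M) : ℝ :=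
  ∑ i ∈ Finset.univ.erase m, h i * primaryCoeff ε ρ (g i)

def secondaryCoeff (ε ρ : ℝ) (h g : Fin M → ℝ) (m : Fin M) : ℝ :=
  min (max 0 ((g m - ε / ρ) / ((ε + 1) * g m)))
    (max 0 ((h m - ε * interference ε ρ h g m - ε / ρ) / ((ε + 1) * h m)))

def secondarySINR (ε ρ : ℝ) (h g : Fin M → ℝ) (m : Fin M) : ℝ :=
  h m * secondaryCoeff ε ρ h g m / (interference ε ρ h g m + 1 / ρ)

lemma primaryCoeff_nonneg {ε ρ g : ℝ} (hε : 0 ≤ ε) (hρ : 0 ≤ ρ) (hg : 0 ≤ g) :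
    0 ≤ primaryCoeff ε ρ g :=
  le_min zero_le_one (by positivity)

lemma tendsto_primaryCoeff (ε : ℝ) {g : ℝ} (hg : 0 < g) :
    Tendsto (fun ρ ↦ primaryCoeff ε ρ g) atTop (𝓝 0) := by
  have := (tendsto_const_nhds (x := (1 : ℝ))).min
    (tendsto_const_nhds.div_atTop (tendsto_id.atTop_mul_const hg) :
      Tendsto (fun ρ : ℝ ↦ ε / (ρ * g)) atTop (𝓝 0))
  rwa [min_eq_right zero_le_one] at this

variable {h g : Fin M → ℝ}

lemma interference_nonneg {ε ρ : ℝ} (hε : 0 ≤ ε) (hρ : 0 ≤ ρ) (hh : ∀ i, 0 ≤ h i)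
    (hg : ∀ i, 0 ≤ g i) (m : Fin M) : 0 ≤ interference ε ρ h g m :=
  Finset.sum_nonneg fun i _ ↦ mul_nonneg (hh i) (primaryCoeff_nonneg hε hρ (hg i))

lemma tendsto_interference (ε : ℝ) (hg : ∀ i, 0 < g i) (m : Fin M) :
    Tendsto (fun ρ ↦ interference ε ρ h g m) atTop (𝓝 0) := by
  have := tendsto_finsetSum (Finset.univ.erase m)
    fun i _ ↦ (tendsto_primaryCoeff ε (hg i)).const_mul (h i)
  rwa [Finset.sum_eq_zero fun i _ ↦ mul_zero (h i)] at this

lemma tendsto_secondaryCoeff {ε : ℝ} (hε : 0 ≤ ε) (hh : ∀ i, 0 < h i) (hg : ∀ i, 0 < g i)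
    (m : Fin M) : Tendsto (fun ρ ↦ secondaryCoeff ε ρ h g m) atTop (𝓝 (1 / (ε + 1))) := by
  have hinv : Tendsto (fun ρ : ℝ ↦ ε / ρ) atTop (𝓝 0) := tendsto_const_nhds.div_atTop tendsto_id
  have hgm := ((tendsto_const_nhds (x := g m)).sub hinv).div_const ((ε + 1) * g m)
  have hhm := (((tendsto_const_nhds (x := h m)).sub
    ((tendsto_interference (h := h) ε hg m).const_mul ε)).sub hinv).div_const ((ε + 1) * h m)
  have hlim : ∀ x : ℝ, 0 < x → max 0 (x / ((ε + 1) * x)) = 1 / (ε + 1) := fun x hx ↦ by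
    rw [mul_comm, ← div_div, div_self hx.ne', max_eq_right (by positivity)]
  have := ((tendsto_const_nhds (x := (0 : ℝ))).max hgm).min
    ((tendsto_const_nhds (x := (0 : ℝ))).max hhm)
  simp only [mul_zero, sub_zero] at this
  rwa [hlim _ (hg m), hlim _ (hh m), min_self] at this

lemma tendsto_secondarySINR {ε : ℝ} (hε : 0 ≤ ε) (hh : ∀ i, 0 < h i) (hg : ∀ i, 0 < g i)
    (m : Fin M) : Tendsto (fun ρ ↦ secondarySINR ε ρ h g m) atTop atTop := by
  have hden : Tendsto (fun ρ ↦ interference ε ρ h g m + 1 / ρ) atTop (𝓝[>] 0) := by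
    refine tendsto_nhdsWithin_of_tendsto_nhds_of_eventually_within _ ?_ ?_
    · simpa using (tendsto_interference (h := h) ε hg m).add tendsto_inv_atTop_zero
    · filter_upwards [eventually_gt_atTop 0] with ρ hρ
      have := interference_nonneg hε hρ.le (fun i ↦ (hh i).le) (fun i ↦ (hg i).le) m
      exact add_pos_of_nonneg_of_pos this (one_div_pos.mpr hρ)
  simpa [secondarySINR, div_eq_mul_inv] using
    ((tendsto_secondaryCoeff hε hh hg m).const_mul (h m)).pos_mul_atTop
      (mul_pos (hh m) (by positivity)) hden.inv_tendsto_nhdsGT_zero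

lemma eventually_secondary_decodable {ε : ℝ} (hε : 0 ≤ ε) (hh : ∀ i, 0 < h i)
    (hg : ∀ i, 0 < g i) (m : Fin M) (t : ℝ) :
    ∀ᶠ ρ in atTop, 0 < secondaryCoeff ε ρ h g m ∧ t ≤ secondarySINR ε ρ h g m :=
  ((tendsto_secondaryCoeff hε hh hg m).eventually (eventually_gt_nhds (by positivity))).and
    ((tendsto_secondarySINR hε hh hg m).eventually_ge_atTop t)

section Measurability

variable {Ω : Type*} [MeasurableSpace Ω] {h g : Fin M → Ω → ℝ}

lemma measurable_interference (hh : ∀ i, Measurable (h i)) (hg : ∀ i, Measurable (g i))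
    (ε ρ : ℝ) (m : Fin M) : Measurable fun ω ↦ interference ε ρ (h · ω) (g · ω) m := by
  unfold interference primaryCoeff
  fun_prop

lemma measurable_secondaryCoeff (hh : ∀ i, Measurable (h i)) (hg : ∀ i, Measurable (g i))
    (ε ρ : ℝ) (m : Fin M) : Measurable fun ω ↦ secondaryCoeff ε ρ (h · ω) (g · ω) m := by
  have := measurable_interference hh hg ε ρ m
  unfold secondaryCoeff
  fun_prop

lemma measurable_secondarySINR (hh : ∀ i, Measurable (h i)) (hg : ∀ i, Measurable (g i))
    (ε ρ : ℝ) (m : Fin M) : Measurable fun ω ↦ secondarySINR ε ρ (h · ω) (g · ω) m := by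
  have := measurable_interference hh hg ε ρ m
  have := measurable_secondaryCoeff hh hg ε ρ m
  unfold secondarySINR
  fun_prop

lemma measurableSet_outage (hh : ∀ i, Measurable (h i)) (hg : ∀ i, Measurable (g i))
    (ε ρ t : ℝ) : MeasurableSet {ω | ∀ m, ¬ (0 < secondaryCoeff ε ρ (h · ω) (g · ω) m ∧
      t ≤ secondarySINR ε ρ (h · ω) (g · ω) m)} := by
  simp only [Set.ofPred_forall]
  exact .iInter fun m ↦
    ((measurableSet_lt measurable_const (measurable_secondaryCoeff hh hg ε ρ m)).inter
      (measurableSet_le measurable_const (measurable_secondarySINR hh hg ε ρ m))).compl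

end Measurability

end BeamNOMA

end

theorem stmt_12_general {Ω : Type*} [MeasurableSpace Ω] (μ : Measure Ω) [IsProbabilityMeasure μ]
    (M : ℕ) (hM : 0 < M) (h g : Fin M → Ω → ℝ)
    (hmeas : ∀ i, Measurable (h i)) (gmeas : ∀ i, Measurable (g i))
    (hpos : ∀ i, ∀ᵐ ω ∂μ, 0 < h i ω) (gpos : ∀ i, ∀ᵐ ω ∂μ, 0 < g i ω)
    (RP : ℝ) (hRP : 0 < RP)
    (εP εs : ℝ) (hεP : εP = 2 ^ RP - 1)
    (αPI : ℝ → Fin M → Ω → ℝ)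
    (hαPI : ∀ ρ i ω, αPI ρ i ω = min 1 (εP / (ρ * g i ω)))
    (αSII : ℝ → Fin M → Ω → ℝ)
    (hαSII : ∀ ρ m ω, αSII ρ m ω =
      min (max 0 ((g m ω - εP / ρ) / ((εP + 1) * g m ω)))
          (max 0 ((h m ω - εP * (∑ i ∈ Finset.univ.erase m, h i ω * αPI ρ i ω)
              - εP / ρ) / ((εP + 1) * h m ω))))
    (γ : ℝ → Fin M → Ω → ℝ)
    (hγ : ∀ ρ m ω, γ ρ m ω = h m ω * αSII ρ m ω /
        ((∑ i ∈ Finset.univ.erase m, h i ω * αPI ρ i ω) + 1 / ρ)) :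
    Tendsto (fun ρ : ℝ =>
        (μ {ω | ∀ m, ¬ (0 < αSII ρ m ω ∧ εs ≤ γ ρ m ω)}).toReal)
      atTop (nhds 0) := by
  have hε : 0 ≤ εP := hεP ▸ sub_nonneg.2 (Real.one_le_rpow one_le_two hRP.le)
  have hα : ∀ ρ m ω, αSII ρ m ω = BeamNOMA.secondaryCoeff εP ρ (h · ω) (g · ω) m := by
    intro ρ m ω
    simp only [hαSII, hαPI]
    rfl
  have hγ' : ∀ ρ m ω, γ ρ m ω = BeamNOMA.secondarySINR εP ρ (h · ω) (g · ω) m := by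
    intro ρ m ω
    simp only [hγ, hα, hαPI]
    rfl
  simp only [hα, hγ']
  refine (ENNReal.tendsto_toReal_zero_iff).2 ?_
  have := tendsto_measure_of_ae_tendsto_indicator_of_isFiniteMeasure (μ := μ) atTop
    MeasurableSet.empty (BeamNOMA.measurableSet_outage hmeas gmeas εP · εs) ?_
  · rwa [measure_empty] at this
  filter_upwards [ae_all_iff.2 hpos, ae_all_iff.2 gpos] with ω hhω hgω
  filter_upwards [BeamNOMA.eventually_secondary_decodable hε hhω hgω ⟨0, hM⟩ εs] with ρ hρ
  exact iff_of_false (fun hout ↦ hout _ hρ) (Set.notMem_empty ω)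

/-- Lemma 1: for the beam-selection NOMA scheme with power allocation (6), a.s.
strictly positive channel gains (whose distributions do not depend on `ρ`), the
outage probability (no beam allows both successful SIC of the primary signal and
decoding of the secondary signal) tends to `0` as `ρ → ∞`: no error floor. -/
theorem stmt_12 {Ω : Type*} [MeasurableSpace Ω] (μ : Measure Ω) [IsProbabilityMeasure μ]
    (M : ℕ) (hM : 0 < M) (h g : Fin M → Ω → ℝ)
    (hmeas : ∀ i, Measurable (h i)) (gmeas : ∀ i, Measurable (g i))
    (hpos : ∀ i, ∀ᵐ ω ∂μ, 0 < h i ω) (gpos : ∀ i, ∀ᵐ ω ∂μ, 0 < g i ω)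
    (RP RS : ℝ) (hRP : 0 < RP) (hRS : 0 < RS)
    (εP εs : ℝ) (hεP : εP = 2 ^ RP - 1) (hεs : εs = 2 ^ RS - 1)
    (αPI : ℝ → Fin M → Ω → ℝ)
    (hαPI : ∀ ρ i ω, αPI ρ i ω = min 1 (εP / (ρ * g i ω)))
    (αSII : ℝ → Fin M → Ω → ℝ)
    (hαSII : ∀ ρ m ω, αSII ρ m ω =
      min (max 0 ((g m ω - εP / ρ) / ((εP + 1) * g m ω)))
          (max 0 ((h m ω - εP * (∑ i ∈ Finset.univ.erase m, h i ω * αPI ρ i ω)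
              - εP / ρ) / ((εP + 1) * h m ω))))
    (γ : ℝ → Fin M → Ω → ℝ)
    (hγ : ∀ ρ m ω, γ ρ m ω = h m ω * αSII ρ m ω /
        ((∑ i ∈ Finset.univ.erase m, h i ω * αPI ρ i ω) + 1 / ρ)) :
    Tendsto (fun ρ : ℝ =>
        (μ {ω | ∀ m, ¬ (0 < αSII ρ m ω ∧ εs ≤ γ ρ m ω)}).toReal)
      atTop (nhds 0) :=
  stmt_12_general μ M hM h g hmeas gmeas hpos gpos RP hRP εP εs hεP αPI hαPI αSII hαSII γ hγ
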